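/- arXiv:2105.01309 — 3 statements merged into one kernel-verified Lean document; each statement's English description precedes it below -/
import Mathlib

section
/- Let $0<r<1$ and let $x,y$ lie in the annular ring $R(r,1)=\{z\in\mathbb{C}: r<|z|<1\}$ with $[x,y]\cap \overline{B}^2(0,r)=\varnothing$. If $z\in\partial R(r,1)$ gives the infimum $\inf_{z\in\partial R(r,1)}(|x-z|+|z-y|)$, then $z$ satisfies the quartic equation $\overline{x}\overline{y}z^4 - j^2(\overline{x}+\overline{y})z^3 + j^4(x+y)z - j^4 xy = 0$ with either $j=r$ or $j=1$. -/
open Real Set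

/-- The annular ring `R(r,1) = {z : r < |z| < 1}`. -/
def annulus (r : ℝ) : Set ℂ := {z : ℂ | r < ‖z‖ ∧ ‖z‖ < 1}

/-- The triangular ratio metric `s_G`. -/
noncomputable def sMetric (G : Set ℂ) (x y : ℂ) : ℝ :=
  ‖x - y‖ /
    sInf ((fun z => ‖x - z‖ + ‖z - y‖) '' frontier G)

/-- The `j*`-metric. -/
noncomputable def jStar (G : Set ℂ) (x y : ℂ) : ℝ :=
  ‖x - y‖ /
    (‖x - y‖ +
      2 * min (Metric.infDist x (frontier G)) (Metric.infDist y (frontier G)))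

/-- The (absolute) cross-ratio `|a,x,b,y|`. -/
noncomputable def crossRatio (a x b y : ℂ) : ℝ :=
  (‖a - b‖ * ‖x - y‖) / (‖a - x‖ * ‖b - y‖)

/-- The Möbius (Seittenranta) metric `δ_G`. -/
noncomputable def deltaMetric (G : Set ℂ) (x y : ℂ) : ℝ :=
  sSup ((fun p : ℂ × ℂ => Real.log (1 + crossRatio p.1 x p.2 y)) '' (frontier G ×ˢ frontier G))
/-!
Rotate the minimizer `z` along its circle, `t ↦ z e^{it}`. The first-order condition at `t = 0`
says that `a = z̄(z-x)/|z-x|` and `b = z̄(z-y)/|z-y|`, two numbers of modulus `|z|`, have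
`Im (a + b) = 0`. Then either `a + b = 0`, which puts `z` on the segment `[x,y]` (excluded, since
that segment lies inside the open annulus), or `ab` is real. Reality of `z̄²(z-x)(z-y)`, multiplied
out with `z z̄ = |z|²`, is exactly the quartic with `j = |z|`.
-/

open Complex ComplexConjugate Metric

theorem HasDerivAt.norm {F : Type*} [NormedAddCommGroup F] [InnerProductSpace ℝ F]
    {f : ℝ → F} {f' : F} {t : ℝ} (hf : HasDerivAt f f' t) (h0 : f t ≠ 0) :
    HasDerivAt (fun s => ‖f s‖) (Inner.inner ℝ (f t) f' / ‖f t‖) t := by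
  have h := hf.norm_sq.sqrt (by simpa using h0)
  simp only [Real.sqrt_sq (norm_nonneg _)] at h
  convert h using 1
  field_simp

theorem hasDerivAt_norm_mul_exp_mul_I_sub {z x : ℂ} (h : z ≠ x) :
    HasDerivAt (fun t : ℝ => ‖z * exp (t * I) - x‖) ((conj z * (z - x)).im / ‖z - x‖) 0 := by
  have hrot : HasDerivAt (fun t : ℝ => z * exp (t * I) - x) (z * I) 0 := by
    simpa using (((hasDerivAt_id (0 : ℝ)).ofReal_comp.mul_const I).cexp.const_mul z).sub_const x
  convert hrot.norm (by simpa [sub_eq_zero] using h) using 1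
  simp only [ofReal_zero, zero_mul, Complex.exp_zero, mul_one]
  congr 1
  simp only [Complex.inner, mul_re, mul_im, sub_re, sub_im, conj_re, conj_im, I_re, I_im]
  ring

theorem IsMinOn.inv_norm_mul_im_add_eq_zero {x y z : ℂ} (hzx : z ≠ x) (hzy : z ≠ y)
    (hmin : IsMinOn (fun w => ‖w - x‖ + ‖w - y‖) (sphere 0 ‖z‖) z) :
    ‖z - x‖⁻¹ * (conj z * (z - x)).im + ‖z - y‖⁻¹ * (conj z * (z - y)).im = 0 := by
  have hloc : IsLocalMin (fun t : ℝ => ‖z * exp (t * I) - x‖ + ‖z * exp (t * I) - y‖) 0 :=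
    .of_forall fun t => by
      simpa using hmin (by simp [norm_exp_ofReal_mul_I] : z * exp (t * I) ∈ _)
  have := hloc.hasDerivAt_eq_zero
    ((hasDerivAt_norm_mul_exp_mul_I_sub hzx).add (hasDerivAt_norm_mul_exp_mul_I_sub hzy))
  rw [← this]
  ring

theorem Complex.im_mul_eq_zero_or_add_eq_zero {a b : ℂ} (hab : ‖a‖ = ‖b‖) (h : (a + b).im = 0) :
    (a * b).im = 0 ∨ a + b = 0 := by
  have him : a.im = -b.im := by simp only [add_im] at h; linarith
  have hsq : a.re ^ 2 = b.re ^ 2 := by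
    have := congrArg (· ^ 2) hab
    simp only [Complex.sq_norm, normSq_apply] at this
    rw [him] at this
    linarith
  rcases sq_eq_sq_iff_eq_or_eq_neg.1 hsq with hre | hre
  · left
    simp only [mul_im, him, hre]
    ring
  · right
    refine Complex.ext ?_ h
    simp only [add_re, zero_re]
    linarith

theorem mem_segment_of_inv_norm_smul_add_eq_zero {E : Type*} [NormedAddCommGroup E]
    [NormedSpace ℝ E] {x y z : E} (h : ‖z - x‖⁻¹ • (z - x) + ‖z - y‖⁻¹ • (z - y) = 0) :
    z ∈ segment ℝ x y := by
  rw [mem_segment_iff_sameRay, sameRay_iff_inv_norm_smul_eq]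
  right; right
  rw [← neg_sub z y, norm_neg, smul_neg, ← sub_eq_zero, sub_neg_eq_add, h]

theorem quartic_of_im_eq_zero {x y z : ℂ} (h : (conj z * (z - x) * (conj z * (z - y))).im = 0) :
    conj x * conj y * z ^ 4 - (‖z‖ : ℂ) ^ 2 * (conj x + conj y) * z ^ 3
      + (‖z‖ : ℂ) ^ 4 * (x + y) * z - (‖z‖ : ℂ) ^ 4 * x * y = 0 := by
  have hreal := conj_eq_iff_im.2 h
  simp only [map_mul, map_sub, conj_conj] at hreal
  linear_combination z ^ 2 * hreal + ((conj x + conj y) * z ^ 3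
    - (z * conj z + (‖z‖ : ℂ) ^ 2) * ((x + y) * z - x * y)) * mul_conj' z

theorem quartic_of_isMinOn_sphere {x y z : ℂ} (hseg : z ∉ segment ℝ x y)
    (hmin : IsMinOn (fun w => ‖w - x‖ + ‖w - y‖) (sphere 0 ‖z‖) z) :
    conj x * conj y * z ^ 4 - (‖z‖ : ℂ) ^ 2 * (conj x + conj y) * z ^ 3
      + (‖z‖ : ℂ) ^ 4 * (x + y) * z - (‖z‖ : ℂ) ^ 4 * x * y = 0 := by
  rcases eq_or_ne z 0 with rfl | hz0
  · simp
  have hzx : z ≠ x := fun h => hseg (h ▸ left_mem_segment ℝ x y)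
  have hzy : z ≠ y := fun h => hseg (h ▸ right_mem_segment ℝ x y)
  apply quartic_of_im_eq_zero
  set a := ‖z - x‖⁻¹ • (conj z * (z - x))
  set b := ‖z - y‖⁻¹ • (conj z * (z - y))
  have hzx' : ‖z - x‖ ≠ 0 := norm_ne_zero_iff.2 (sub_ne_zero.2 hzx)
  have hzy' : ‖z - y‖ ≠ 0 := norm_ne_zero_iff.2 (sub_ne_zero.2 hzy)
  have hab : ‖a‖ = ‖b‖ := by
    simp only [a, b, norm_smul, norm_mul, norm_inv, norm_norm, Complex.norm_conj]
    field_simp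
  have hcrit : (a + b).im = 0 := by
    simpa [a, b] using hmin.inv_norm_mul_im_add_eq_zero hzx hzy
  rcases im_mul_eq_zero_or_add_eq_zero hab hcrit with h | h
  · rw [smul_mul_smul_comm, smul_im, smul_eq_zero] at h
    exact h.resolve_left (by simp [hzx', hzy'])
  · refine absurd (mem_segment_of_inv_norm_smul_add_eq_zero ?_) hseg
    simp only [a, b, ← mul_smul_comm, ← mul_add] at h
    exact (mul_eq_zero.1 h).resolve_left (by simpa using hz0)

theorem segment_subset_annulus {r : ℝ} {x y : ℂ} (hx : x ∈ annulus r) (hy : y ∈ annulus r)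
    (hseg : segment ℝ x y ∩ closedBall 0 r = ∅) : segment ℝ x y ⊆ annulus r := by
  intro w hw
  have hw1 : w ∈ ball (0 : ℂ) 1 :=
    (convex_ball 0 1).segment_subset (by simpa using hx.2) (by simpa using hy.2) hw
  have hwr : w ∉ closedBall (0 : ℂ) r := fun h => eq_empty_iff_forall_notMem.1 hseg w ⟨hw, h⟩
  simp_all [annulus]

theorem stmt1_general (r : ℝ) (x y z : ℂ)
    (hx : x ∈ annulus r) (hy : y ∈ annulus r)
    (hseg : segment ℝ x y ∩ Metric.closedBall 0 r = ∅)
    (hz : ‖z‖ = r ∨ ‖z‖ = 1)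
    (hmin : ∀ w : ℂ, (‖w‖ = r ∨ ‖w‖ = 1) →
      ‖x - z‖ + ‖z - y‖ ≤ ‖x - w‖ + ‖w - y‖) :
    ∃ j : ℝ, (j = r ∨ j = 1) ∧
      (starRingEnd ℂ) x * (starRingEnd ℂ) y * z ^ 4
        - (j : ℂ) ^ 2 * ((starRingEnd ℂ) x + (starRingEnd ℂ) y) * z ^ 3
        + (j : ℂ) ^ 4 * (x + y) * z - (j : ℂ) ^ 4 * x * y = 0 := by
  refine ⟨‖z‖, hz, quartic_of_isMinOn_sphere ?_ ?_⟩
  · intro hzseg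
    have := segment_subset_annulus hx hy hseg hzseg
    rcases hz with h | h <;> simp [annulus, h] at this
  · intro w hw
    simpa [norm_sub_rev x] using hmin w (mem_sphere_zero_iff_norm.1 hw ▸ hz)

/-- If `x,y ∈ R(r,1)` with `[x,y] ∩ closedBall 0 r = ∅` and `z ∈ ∂R(r,1)` minimizes
`|x-z|+|z-y|`, then `z` satisfies the quartic equation
`x̄ȳz⁴ - j²(x̄+ȳ)z³ + j⁴(x+y)z - j⁴xy = 0` with `j = r` or `j = 1`. -/
theorem stmt1 (r : ℝ) (hr0 : 0 < r) (hr1 : r < 1) (x y z : ℂ)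
    (hx : x ∈ annulus r) (hy : y ∈ annulus r)
    (hseg : segment ℝ x y ∩ Metric.closedBall 0 r = ∅)
    (hz : ‖z‖ = r ∨ ‖z‖ = 1)
    (hmin : ∀ w : ℂ, (‖w‖ = r ∨ ‖w‖ = 1) →
      ‖x - z‖ + ‖z - y‖ ≤ ‖x - w‖ + ‖w - y‖) :
    ∃ j : ℝ, (j = r ∨ j = 1) ∧
      (starRingEnd ℂ) x * (starRingEnd ℂ) y * z ^ 4
        - (j : ℂ) ^ 2 * ((starRingEnd ℂ) x + (starRingEnd ℂ) y) * z ^ 3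
        + (j : ℂ) ^ 4 * (x + y) * z - (j : ℂ) ^ 4 * x * y = 0 :=
  stmt1_general r x y z hx hy hseg hz hmin
end

section
/- For all points $x,y \in R(r,1)$ collinear with the origin, on opposite rays from the origin (angle $\angle x0y = \pi$), and with $|y| \le |x|$, it holds that $\mathrm{th}\frac{\delta_{R(r,1)}(x,y)}{2} = \max\left\{ \frac{|x|+|y|}{1+|x||y|},\ \frac{r(|x|+|y|)}{|x||y|+r^2},\ \frac{(|x|+|y|)(1+r)}{2(1-|x|)(|y|-r)+(|x|+|y|)(1+r)} \right\}$. -/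
/-!
For boundary points `a`, `b` with `|a| = ρ`, `|b| = σ`, the triangle inequality gives
`|a,x,b,y| ≤ (ρ + σ)(|x| + |y|) / (|ρ - |x|| |σ - |y||)`, with equality when `a` lies on the ray
of `x` and `b` on the opposite ray, which contains `y`. The boundary of `R(r,1)` is the union of
the circles of radii `r` and `1`, so the supremum of the cross-ratio is the largest of these
bounds for `ρ, σ ∈ {r, 1}`; the pair `(r, 1)` is dominated by `(1, r)` because `|y| ≤ |x|`.
Finally `th (log (1 + c) / 2) = c / (c + 2)` is increasing in `c`, so it commutes with the maximum.
-/

open Real Set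

lemma tanh_half_log_one_add {c : ℝ} (hc : -1 < c) :
    tanh (log (1 + c) / 2) = c / (c + 2) := by
  have hw : exp (log (1 + c) / 2) ^ 2 = 1 + c := by
    rw [← exp_nat_mul, Nat.cast_two, mul_div_cancel₀ _ two_ne_zero, exp_log (by linarith)]
  rw [tanh_eq, exp_neg]
  have hc2 : c + 2 ≠ 0 := by linarith
  field_simp
  rw [hw]
  ring

lemma monotoneOn_div_add_two : MonotoneOn (fun c : ℝ => c / (c + 2)) (Ici 0) :=
  fun c hc d hd hcd => by
    rw [mem_Ici] at hc hd
    rw [div_le_div_iff₀ (by linarith) (by linarith)]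
    linarith

lemma div_div_add_two {N D : ℝ} (hD : D ≠ 0) :
    N / D / (N / D + 2) = N / (N + 2 * D) := by
  field_simp

lemma crossRatio_nonneg (a x b y : ℂ) : 0 ≤ crossRatio a x b y := by
  unfold crossRatio
  positivity

lemma crossRatio_le (a x b y : ℂ) (hax : ‖a‖ ≠ ‖x‖) (hby : ‖b‖ ≠ ‖y‖) :
    crossRatio a x b y ≤ (‖a‖ + ‖b‖) * (‖x‖ + ‖y‖) / (|‖a‖ - ‖x‖| * |‖b‖ - ‖y‖|) := by
  have hax' : 0 < |‖a‖ - ‖x‖| := abs_pos.2 (sub_ne_zero.2 hax)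
  have hby' : 0 < |‖b‖ - ‖y‖| := abs_pos.2 (sub_ne_zero.2 hby)
  unfold crossRatio
  gcongr
  · exact norm_sub_le a b
  · exact norm_sub_le x y
  · exact abs_norm_sub_norm_le a x
  · exact abs_norm_sub_norm_le b y

lemma crossRatio_ofReal_mul {u : ℂ} (hu : ‖u‖ = 1) {ρ s σ t : ℝ} (hρ : 0 ≤ ρ) (hs : 0 ≤ s)
    (hσ : 0 ≤ σ) (ht : 0 ≤ t) :
    crossRatio (ρ * u) (s * u) (-(σ * u)) (-(t * u)) =
      (ρ + σ) * (s + t) / (|ρ - s| * |σ - t|) := by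
  have norm_mul_u (c : ℝ) : ‖(c : ℂ) * u‖ = |c| := by
    rw [norm_mul, hu, mul_one, Complex.norm_real, Real.norm_eq_abs]
  have e1 : (ρ : ℂ) * u - -(σ * u) = ((ρ + σ : ℝ) : ℂ) * u := by push_cast; ring
  have e2 : (s : ℂ) * u - -(t * u) = ((s + t : ℝ) : ℂ) * u := by push_cast; ring
  have e3 : (ρ : ℂ) * u - s * u = ((ρ - s : ℝ) : ℂ) * u := by push_cast; ring
  have e4 : -((σ : ℂ) * u) - -(t * u) = ((t - σ : ℝ) : ℂ) * u := by push_cast; ring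
  rw [crossRatio, e1, e2, e3, e4, norm_mul_u, norm_mul_u, norm_mul_u, norm_mul_u,
    abs_of_nonneg (by positivity), abs_of_nonneg (by positivity), abs_sub_comm t]

lemma deltaMetric_eq_log_one_add {G : Set ℂ} {x y : ℂ} {M : ℝ}
    (hM : IsGreatest ((fun p : ℂ × ℂ => crossRatio p.1 x p.2 y) '' (frontier G ×ˢ frontier G)) M) :
    deltaMetric G x y = log (1 + M) := by
  have hmono : MonotoneOn (fun c : ℝ => log (1 + c)) (Ici 0) := fun c hc d _ hcd =>
    log_le_log (by linarith [mem_Ici.1 hc]) (by linarith)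
  have hsub : (fun p : ℂ × ℂ => crossRatio p.1 x p.2 y) '' (frontier G ×ˢ frontier G) ⊆ Ici 0 := by
    rintro _ ⟨p, -, rfl⟩
    exact crossRatio_nonneg _ _ _ _
  rw [deltaMetric, ← (hmono.mono hsub).map_isGreatest hM |>.csSup_eq, image_image]

lemma tanh_half_deltaMetric {G : Set ℂ} {x y : ℂ} {M : ℝ}
    (hM : IsGreatest ((fun p : ℂ × ℂ => crossRatio p.1 x p.2 y) '' (frontier G ×ˢ frontier G)) M) :
    tanh (deltaMetric G x y / 2) = M / (M + 2) := by
  have hM0 : 0 ≤ M := by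
    obtain ⟨p, -, hp⟩ := hM.1
    exact hp ▸ crossRatio_nonneg _ _ _ _
  rw [deltaMetric_eq_log_one_add hM, tanh_half_log_one_add (by linarith)]

lemma eq_neg_norm_mul_of_sameRay_neg {x y : ℂ} (hx : x ≠ 0) (h : SameRay ℝ x (-y)) :
    y = -(‖y‖ * (x / ‖x‖)) := by
  have hsmul := h.norm_smul_eq
  rw [norm_neg, Complex.real_smul, Complex.real_smul] at hsmul
  have hnx : (‖x‖ : ℂ) ≠ 0 := Complex.ofReal_ne_zero.2 (norm_ne_zero_iff.2 hx)
  field_simp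
  linear_combination -hsmul

lemma isOpen_annulus (r : ℝ) : IsOpen (annulus r) :=
  (isOpen_lt continuous_const continuous_norm).inter (isOpen_lt continuous_norm continuous_const)

lemma frontier_annulus {r : ℝ} (hr0 : 0 < r) (hr1 : r < 1) :
    frontier (annulus r) = {z : ℂ | ‖z‖ = r ∨ ‖z‖ = 1} := by
  apply Subset.antisymm
  · refine (frontier_inter_subset _ _).trans ?_
    rintro z (⟨hz, -⟩ | ⟨-, hz⟩)
    · exact Or.inl (frontier_lt_subset_eq continuous_const continuous_norm hz).symm
    · exact Or.inr (frontier_lt_subset_eq continuous_norm continuous_const hz)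
  · intro z hz
    have hz0 : z ≠ 0 := norm_pos_iff.1 (by rcases hz with hz | hz <;> rw [hz] <;> linarith)
    rw [frontier, (isOpen_annulus r).interior_eq]
    refine ⟨?_, fun ⟨h1, h2⟩ => by rcases hz with hz | hz <;> rw [hz] at h1 h2 <;> linarith⟩
    have hmem : ‖z‖ ∈ closure (Ioo r 1) := by
      rw [closure_Ioo hr1.ne]
      rcases hz with hz | hz <;> rw [hz] <;> constructor <;> linarith
    have hmaps : MapsTo (fun t : ℝ => (t : ℂ) * (z / ‖z‖)) (Ioo r 1) (annulus r) := by
      rintro t ⟨hrt, ht1⟩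
      have : ‖(t : ℂ) * (z / ‖z‖)‖ = t := by
        rw [norm_mul, norm_div, Complex.norm_real, Complex.norm_real, norm_norm,
          div_self (norm_ne_zero_iff.2 hz0), mul_one, Real.norm_of_nonneg (by linarith)]
      show r < _ ∧ _ < 1
      rw [this]
      exact ⟨hrt, ht1⟩
    simpa [mul_div_cancel₀ _ (Complex.ofReal_ne_zero.2 (norm_ne_zero_iff.2 hz0))] using
      map_mem_closure (by fun_prop) hmem hmaps

section Annulus

variable {r s t : ℝ} {u : ℂ}

lemma crossRatio_le_of_mem_frontier_annulus (hr0 : 0 < r) (hr1 : r < 1) (hu : ‖u‖ = 1)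
    (hs : s ∈ Ioo r 1) (ht : t ∈ Ioo r 1) (hts : t ≤ s) {a b : ℂ}
    (ha : a ∈ frontier (annulus r)) (hb : b ∈ frontier (annulus r)) :
    crossRatio a (s * u) b (-(t * u)) ≤
      max (max (2 * (s + t) / ((1 - s) * (1 - t))) (2 * r * (s + t) / ((s - r) * (t - r))))
        ((1 + r) * (s + t) / ((1 - s) * (t - r))) := by
  obtain ⟨hrs, hs1⟩ := hs
  obtain ⟨hrt, ht1⟩ := ht
  have hnx : ‖(s : ℂ) * u‖ = s := by simp [hu, abs_of_pos (hr0.trans hrs)]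
  have hny : ‖-((t : ℂ) * u)‖ = t := by simp [hu, abs_of_pos (hr0.trans hrt)]
  rw [frontier_annulus hr0 hr1] at ha hb
  have bound := crossRatio_le a (s * u) b (-(t * u))
  rw [hnx, hny] at bound
  rcases ha with ha | ha <;> rcases hb with hb | hb <;> rw [ha, hb] at bound
  · refine le_max_of_le_left (le_max_of_le_right ((bound (by linarith) (by linarith)).trans_eq ?_))
    rw [abs_of_neg (by linarith), abs_of_neg (by linarith)]
    ring
  · -- the pair `(r, 1)` is dominated by `(1, r)` because `t ≤ s`
    refine le_max_of_le_right ((bound (by linarith) (by linarith)).trans ?_)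
    rw [abs_of_neg (by linarith), abs_of_pos (by linarith), add_comm r, neg_sub]
    exact div_le_div_of_nonneg_left (mul_nonneg (by linarith) (by linarith))
      (mul_pos (by linarith) (by linarith)) (by nlinarith)
  · refine le_max_of_le_right ((bound (by linarith) (by linarith)).trans_eq ?_)
    rw [abs_of_pos (by linarith), abs_of_neg (by linarith), neg_sub]
  · refine le_max_of_le_left (le_max_of_le_left ((bound (by linarith) (by linarith)).trans_eq ?_))
    rw [abs_of_pos (by linarith), abs_of_pos (by linarith)]
    ring

lemma ofReal_mul_mem_frontier_annulus (hr0 : 0 < r) (hr1 : r < 1) (hu : ‖u‖ = 1) {ρ : ℝ}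
    (hρ : ρ = r ∨ ρ = 1) : (ρ : ℂ) * u ∈ frontier (annulus r) := by
  rw [frontier_annulus hr0 hr1]
  rcases hρ with rfl | rfl
  · simp [hu, abs_of_pos hr0]
  · simp [hu]

lemma isGreatest_crossRatio_annulus (hr0 : 0 < r) (hr1 : r < 1) (hu : ‖u‖ = 1)
    (hs : s ∈ Ioo r 1) (ht : t ∈ Ioo r 1) (hts : t ≤ s) :
    IsGreatest ((fun p : ℂ × ℂ => crossRatio p.1 (s * u) p.2 (-(t * u))) ''
        (frontier (annulus r) ×ˢ frontier (annulus r)))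
      (max (max (2 * (s + t) / ((1 - s) * (1 - t))) (2 * r * (s + t) / ((s - r) * (t - r))))
        ((1 + r) * (s + t) / ((1 - s) * (t - r)))) := by
  refine ⟨?_, ?_⟩
  · obtain ⟨hrs, hs1⟩ := hs
    obtain ⟨hrt, ht1⟩ := ht
    have attained {ρ σ : ℝ} (hρ : ρ = r ∨ ρ = 1) (hσ : σ = r ∨ σ = 1) :
        (ρ + σ) * (s + t) / (|ρ - s| * |σ - t|) ∈
          (fun p : ℂ × ℂ => crossRatio p.1 (s * u) p.2 (-(t * u))) ''
            (frontier (annulus r) ×ˢ frontier (annulus r)) := by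
      have nonneg {c : ℝ} (hc : c = r ∨ c = 1) : 0 ≤ c := by rcases hc with rfl | rfl <;> linarith
      refine ⟨((ρ : ℂ) * u, -((σ : ℂ) * u)), ⟨ofReal_mul_mem_frontier_annulus hr0 hr1 hu hρ, ?_⟩,
        crossRatio_ofReal_mul hu (nonneg hρ) (by linarith) (nonneg hσ) (by linarith)⟩
      simpa using ofReal_mul_mem_frontier_annulus hr0 hr1 (u := -u) (by rwa [norm_neg]) hσ
    refine max_rec' _ (max_rec' _ ?_ ?_) ?_
    · convert attained (.inr rfl) (.inr rfl) using 1
      rw [abs_of_pos (by linarith), abs_of_pos (by linarith)]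
      ring
    · convert attained (.inl rfl) (.inl rfl) using 1
      rw [abs_of_neg (by linarith), abs_of_neg (by linarith)]
      ring
    · convert attained (.inr rfl) (.inl rfl) using 1
      rw [abs_of_pos (by linarith), abs_of_neg (by linarith), neg_sub]
  · rintro _ ⟨⟨a, b⟩, ⟨ha, hb⟩, rfl⟩
    exact crossRatio_le_of_mem_frontier_annulus hr0 hr1 hu hs ht hts ha hb

end Annulus

lemma isGreatest_crossRatio_annulus_of_sameRay_neg {r : ℝ} (hr0 : 0 < r) (hr1 : r < 1) {x y : ℂ}
    (hx : x ∈ annulus r) (hy : y ∈ annulus r) (hray : SameRay ℝ x (-y)) (hle : ‖y‖ ≤ ‖x‖) :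
    IsGreatest ((fun p : ℂ × ℂ => crossRatio p.1 x p.2 y) ''
        (frontier (annulus r) ×ˢ frontier (annulus r)))
      (max (max (2 * (‖x‖ + ‖y‖) / ((1 - ‖x‖) * (1 - ‖y‖)))
          (2 * r * (‖x‖ + ‖y‖) / ((‖x‖ - r) * (‖y‖ - r))))
        ((1 + r) * (‖x‖ + ‖y‖) / ((1 - ‖x‖) * (‖y‖ - r)))) := by
  have hx0 : x ≠ 0 := norm_pos_iff.1 (hr0.trans hx.1)
  have hu : ‖x / ‖x‖‖ = 1 := by simp [hx0]
  have hM := isGreatest_crossRatio_annulus hr0 hr1 hu hx hy hle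
  rwa [mul_div_cancel₀ _ (Complex.ofReal_ne_zero.2 (norm_ne_zero_iff.2 hx0)),
    ← eq_neg_norm_mul_of_sameRay_neg hx0 hray] at hM

/-- For points `x,y ∈ R(r,1)` on opposite rays from the origin (angle `∠x0y = π`)
with `|y| ≤ |x|`, `th(δ_{R(r,1)}(x,y)/2)` equals the maximum of the three stated
quantities. -/
theorem stmt9 (r : ℝ) (hr0 : 0 < r) (hr1 : r < 1) (x y : ℂ)
    (hx : x ∈ annulus r) (hy : y ∈ annulus r)
    (hray : SameRay ℝ x (-y)) (hle : ‖y‖ ≤ ‖x‖) :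
    Real.tanh (deltaMetric (annulus r) x y / 2) =
      max (max ((‖x‖ + ‖y‖) / (1 + ‖x‖ * ‖y‖))
          (r * (‖x‖ + ‖y‖) / (‖x‖ * ‖y‖ + r ^ 2)))
        ((‖x‖ + ‖y‖) * (1 + r) /
          (2 * (1 - ‖x‖) * (‖y‖ - r)
            + (‖x‖ + ‖y‖) * (1 + r))) := by
  have hM := isGreatest_crossRatio_annulus_of_sameRay_neg hr0 hr1 hx hy hray hle
  obtain ⟨hxr, hx1⟩ := hx
  obtain ⟨hyr, hy1⟩ := hy
  have hs : 0 < 1 - ‖x‖ := by linarith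
  have ht : 0 < 1 - ‖y‖ := by linarith
  have hsr : 0 < ‖x‖ - r := by linarith
  have htr : 0 < ‖y‖ - r := by linarith
  have hC1 : 0 ≤ 2 * (‖x‖ + ‖y‖) / ((1 - ‖x‖) * (1 - ‖y‖)) := by positivity
  have hC2 : 0 ≤ 2 * r * (‖x‖ + ‖y‖) / ((‖x‖ - r) * (‖y‖ - r)) := by positivity
  have hC3 : 0 ≤ (1 + r) * (‖x‖ + ‖y‖) / ((1 - ‖x‖) * (‖y‖ - r)) := by positivity
  rw [tanh_half_deltaMetric hM, monotoneOn_div_add_two.map_max (le_max_of_le_left hC1) hC3,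
    monotoneOn_div_add_two.map_max hC1 hC2, div_div_add_two (by positivity),
    div_div_add_two (by positivity), div_div_add_two (by positivity)]
  congr 2
  · rw [div_eq_div_iff (by positivity) (by positivity)]
    ring
  · rw [div_eq_div_iff (by positivity) (by positivity)]
    ring
  all_goals ring
end

section
/- For all non-empty sets $E,F\subset\overline{\mathbb{R}}^n$ with $\overline{E}\cap\overline{F}=\varnothing$, the quantity $\delta(E,F)$ is symmetric: $\delta_{\overline{\mathbb{R}}^n\setminus F}(E) = \delta_{\overline{\mathbb{R}}^n\setminus E}(F)$. -/
open Real Set OnePoint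

/-- The chordal (spherical) metric on `ℝ̂ⁿ = ℝⁿ ∪ {∞}`. -/
noncomputable def chordal {n : ℕ} (x y : OnePoint (EuclideanSpace ℝ (Fin n))) : ℝ :=
  Option.elim x
    (Option.elim y 0 (fun b => 1 / Real.sqrt (1 + ‖b‖ ^ 2)))
    (fun a => Option.elim y (1 / Real.sqrt (1 + ‖a‖ ^ 2))
      (fun b => dist a b / (Real.sqrt (1 + ‖a‖ ^ 2) * Real.sqrt (1 + ‖b‖ ^ 2))))

/-- The cross-ratio `|a,x,b,y|` on `ℝ̂ⁿ`, defined via the chordal metric. -/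
noncomputable def qCross {n : ℕ} (a x b y : OnePoint (EuclideanSpace ℝ (Fin n))) : ℝ :=
  chordal a b * chordal x y / (chordal a x * chordal b y)

/-- The Möbius metric `δ_G` for `G ⊆ ℝ̂ⁿ`. -/
noncomputable def deltaHat {n : ℕ} (G : Set (OnePoint (EuclideanSpace ℝ (Fin n))))
    (x y : OnePoint (EuclideanSpace ℝ (Fin n))) : ℝ :=
  sSup ((fun p : OnePoint (EuclideanSpace ℝ (Fin n)) × OnePoint (EuclideanSpace ℝ (Fin n)) =>
    Real.log (1 + qCross p.1 x p.2 y)) '' (frontier G ×ˢ frontier G))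

/-- The `δ_G`-diameter of a set `E ⊆ G`: `δ_G(E) = sup_{x,y ∈ E} δ_G(x,y)`. -/
noncomputable def deltaDiam {n : ℕ} (G E : Set (OnePoint (EuclideanSpace ℝ (Fin n)))) : ℝ :=
  sSup ((fun p : OnePoint (EuclideanSpace ℝ (Fin n)) × OnePoint (EuclideanSpace ℝ (Fin n)) =>
    deltaHat G p.1 p.2) '' (E ×ˢ E))

/-!
Both sides equal the supremum of `log (1 + |a,x,b,y|)` over `x, y ∈ ∂E` and `a, b ∈ ∂F`, since
the cross-ratio is unchanged by exchanging `(x, y)` with `(a, b)`. To shrink `E` to `∂E`: by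
continuity `x, y` may range over `closure E`, and for fixed `a, b, y` the cross-ratio is a
nonnegative multiple of `q(x, y) / q(a, x)`, which has no local maximum outside `{a}`. At a
finite point `v` this is seen on a line `v + t • d`: for each `b`,
`(1 + |v + t • d|²) · q(b, v + t • d)²` is a polynomial of degree at most two in `t`, and such a
polynomial has a local maximum at `0` only if it is concave with vertex `0`. At `∞` one moves to
infinity along the ray from `y` through `a`.
-/

open Filter Topology Function

variable {n : ℕ}

local notation "V" => EuclideanSpace ℝ (Fin n)
local notation "X" => OnePoint (EuclideanSpace ℝ (Fin n))

section Chordal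

@[simp] lemma chordal_infty_infty : chordal (∞ : X) ∞ = 0 := rfl

@[simp] lemma chordal_infty_coe (w : V) : chordal (∞ : X) w = 1 / √(1 + ‖w‖ ^ 2) := rfl

@[simp] lemma chordal_coe_infty (v : V) : chordal (v : X) ∞ = 1 / √(1 + ‖v‖ ^ 2) := rfl

@[simp] lemma chordal_coe_coe (v w : V) :
    chordal (v : X) w = dist v w / (√(1 + ‖v‖ ^ 2) * √(1 + ‖w‖ ^ 2)) := rfl

lemma chordal_comm (x y : X) : chordal x y = chordal y x := by
  cases x using OnePoint.rec <;> cases y using OnePoint.rec <;> simp [dist_comm, mul_comm]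

lemma chordal_self (x : X) : chordal x x = 0 := by
  cases x using OnePoint.rec <;> simp

lemma chordal_nonneg (x y : X) : 0 ≤ chordal x y := by
  cases x using OnePoint.rec <;> cases y using OnePoint.rec <;> simp; all_goals positivity

lemma chordal_pos {x y : X} (h : x ≠ y) : 0 < chordal x y := by
  cases x using OnePoint.rec <;> cases y using OnePoint.rec
  · exact absurd rfl h
  all_goals simp only [chordal_infty_coe, chordal_coe_infty, chordal_coe_coe]
  · positivity
  · positivity
  · have := dist_pos.2 fun e => h (congrArg _ e)
    positivity

/-- Together with `sphereHeight`, the inverse stereographic projection `ℝ̂ⁿ → ℝⁿ × ℝ` onto the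
sphere of radius `1/2` centred at `(0, 1/2)`, sending `∞` to the origin; `chordal` is the
Euclidean distance of the images (`chordal_eq_sqrt`). -/
noncomputable def sphereVec (x : X) : V := x.elim 0 fun v => (1 + ‖v‖ ^ 2)⁻¹ • v

noncomputable def sphereHeight (x : X) : ℝ := x.elim 0 fun v => (1 + ‖v‖ ^ 2)⁻¹

lemma tendsto_inv_one_add_norm_sq :
    Tendsto (fun v : V => (1 + ‖v‖ ^ 2)⁻¹) (coclosedCompact V) (𝓝 0) := by
  rw [coclosedCompact_eq_cocompact]
  refine Tendsto.inv_tendsto_atTop (tendsto_atTop_add_const_left _ _ ?_)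
  exact (tendsto_pow_atTop two_ne_zero).comp tendsto_norm_cocompact_atTop

lemma continuous_inv_one_add_norm_sq : Continuous fun v : V => (1 + ‖v‖ ^ 2)⁻¹ :=
  (by fun_prop : Continuous fun v : V => 1 + ‖v‖ ^ 2).inv₀ fun v => by positivity

lemma continuous_sphereHeight : Continuous (sphereHeight (n := n)) :=
  (OnePoint.continuous_iff _).2
    ⟨tendsto_inv_one_add_norm_sq, continuous_inv_one_add_norm_sq⟩

lemma continuous_sphereVec : Continuous (sphereVec (n := n)) := by
  refine (OnePoint.continuous_iff _).2
    ⟨?_, continuous_inv_one_add_norm_sq.smul continuous_id⟩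
  have hle : ∀ v : V, ‖(1 + ‖v‖ ^ 2)⁻¹ • v‖ ≤ √((1 + ‖v‖ ^ 2)⁻¹) := by
    intro v
    set u := (1 + ‖v‖ ^ 2)⁻¹
    have hu : 0 ≤ u := by positivity
    have hvu : u * ‖v‖ ^ 2 ≤ 1 := by
      calc u * ‖v‖ ^ 2 ≤ u * (1 + ‖v‖ ^ 2) := by gcongr; linarith
        _ = 1 := inv_mul_cancel₀ (by positivity)
    rw [norm_smul, Real.norm_of_nonneg hu]
    apply Real.le_sqrt_of_sq_le
    calc (u * ‖v‖) ^ 2 = u * (u * ‖v‖ ^ 2) := by ring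
      _ ≤ u * 1 := by gcongr
      _ = u := mul_one u
  exact squeeze_zero_norm hle (by simpa using tendsto_inv_one_add_norm_sq.sqrt)

lemma chordal_coe_infty_sq (v : V) :
    chordal (v : X) ∞ ^ 2 = ‖(1 + ‖v‖ ^ 2)⁻¹ • v‖ ^ 2 + ((1 + ‖v‖ ^ 2)⁻¹) ^ 2 := by
  have hv : 0 < 1 + ‖v‖ ^ 2 := by positivity
  rw [chordal_coe_infty, div_pow, Real.sq_sqrt hv.le, norm_smul,
    Real.norm_of_nonneg (by positivity)]
  field_simp
  ring

lemma chordal_coe_coe_sq (v w : V) :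
    chordal (v : X) w ^ 2 = ‖(1 + ‖v‖ ^ 2)⁻¹ • v - (1 + ‖w‖ ^ 2)⁻¹ • w‖ ^ 2 +
      ((1 + ‖v‖ ^ 2)⁻¹ - (1 + ‖w‖ ^ 2)⁻¹) ^ 2 := by
  have hv : 0 < 1 + ‖v‖ ^ 2 := by positivity
  have hw : 0 < 1 + ‖w‖ ^ 2 := by positivity
  rw [chordal_coe_coe, div_pow, mul_pow, Real.sq_sqrt hv.le, Real.sq_sqrt hw.le, dist_eq_norm,
    norm_sub_sq_real, norm_sub_sq_real, real_inner_smul_left, real_inner_smul_right, norm_smul,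
    norm_smul, Real.norm_of_nonneg (inv_nonneg.2 hv.le), Real.norm_of_nonneg (inv_nonneg.2 hw.le)]
  field_simp
  ring

lemma chordal_sq_eq (x y : X) :
    chordal x y ^ 2 = ‖sphereVec x - sphereVec y‖ ^ 2 + (sphereHeight x - sphereHeight y) ^ 2 := by
  cases x using OnePoint.rec <;> cases y using OnePoint.rec
  · simp [sphereVec, sphereHeight]
  · rw [chordal_comm, chordal_coe_infty_sq]
    simp [sphereVec, sphereHeight]
  · rw [chordal_coe_infty_sq]
    simp [sphereVec, sphereHeight]
  · exact chordal_coe_coe_sq _ _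

lemma chordal_eq_sqrt (x y : X) :
    chordal x y = √(‖sphereVec x - sphereVec y‖ ^ 2 + (sphereHeight x - sphereHeight y) ^ 2) := by
  rw [← chordal_sq_eq, Real.sqrt_sq (chordal_nonneg x y)]

lemma continuous_chordal : Continuous fun p : X × X => chordal p.1 p.2 := by
  simp only [chordal_eq_sqrt]
  have := continuous_sphereVec (n := n)
  have := continuous_sphereHeight (n := n)
  fun_prop

lemma continuous_chordal_left (y : X) : Continuous fun x : X => chordal x y :=
  continuous_chordal.comp (continuous_id.prodMk continuous_const)

lemma continuous_chordal_right (a : X) : Continuous fun x : X => chordal a x :=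
  continuous_chordal.comp (continuous_const.prodMk continuous_id)

end Chordal

section MaximumPrinciple

lemma IsLocalMax.quadratic_coeff_nonpos_and_le {φ : ℝ → ℝ} (h : IsLocalMax φ 0) {α β γ : ℝ}
    (hφ : ∀ t, φ t = α + β * t + γ * t ^ 2) : γ ≤ 0 ∧ ∀ t, φ t ≤ φ 0 := by
  obtain rfl : φ = fun t => α + β * t + γ * t ^ 2 := funext hφ
  have hderiv : HasDerivAt (fun t => α + β * t + γ * t ^ 2) β 0 := by
    simpa using (((hasDerivAt_id (0 : ℝ)).const_mul β).const_add α).fun_add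
      ((hasDerivAt_pow 2 (0 : ℝ)).const_mul γ)
  obtain rfl := h.hasDerivAt_eq_zero hderiv
  have hγ : γ ≤ 0 := by
    by_contra! hγ
    obtain ⟨t, ht, ht0⟩ :=
      ((h.filter_mono nhdsWithin_le_nhds).and (self_mem_nhdsWithin (s := {0}ᶜ))).exists
    have : 0 < γ * t ^ 2 := mul_pos hγ (sq_pos_of_ne_zero ht0)
    simp only at ht
    linarith
  exact ⟨hγ, fun t => by nlinarith [sq_nonneg t]⟩

noncomputable def weightedChordalSq (b : X) (v : V) : ℝ := (1 + ‖v‖ ^ 2) * chordal b v ^ 2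

lemma weightedChordalSq_infty (v : V) : weightedChordalSq ∞ v = 1 := by
  have hv : 0 < 1 + ‖v‖ ^ 2 := by positivity
  rw [weightedChordalSq, chordal_infty_coe, div_pow, Real.sq_sqrt hv.le]
  field_simp

lemma weightedChordalSq_coe (w v : V) : weightedChordalSq w v = ‖v - w‖ ^ 2 / (1 + ‖w‖ ^ 2) := by
  have hv : 0 < 1 + ‖v‖ ^ 2 := by positivity
  have hw : 0 < 1 + ‖w‖ ^ 2 := by positivity
  rw [weightedChordalSq, chordal_coe_coe, div_pow, mul_pow, Real.sq_sqrt hv.le,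
    Real.sq_sqrt hw.le, dist_eq_norm, norm_sub_rev]
  field_simp

lemma weightedChordalSq_coe_line (w v d : V) (t : ℝ) :
    weightedChordalSq w (v + t • d) = weightedChordalSq w v +
      2 * inner ℝ (v - w) d / (1 + ‖w‖ ^ 2) * t + ‖d‖ ^ 2 / (1 + ‖w‖ ^ 2) * t ^ 2 := by
  rw [weightedChordalSq_coe, weightedChordalSq_coe, add_sub_right_comm, norm_add_sq_real,
    real_inner_smul_right, norm_smul, Real.norm_eq_abs, mul_pow, sq_abs]
  ring

lemma exists_weightedChordalSq_line (b : X) (v d : V) :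
    ∃ α β γ : ℝ, ∀ t, weightedChordalSq b (v + t • d) = α + β * t + γ * t ^ 2 := by
  cases b using OnePoint.rec with
  | infty => exact ⟨1, 0, 0, fun t => by simp [weightedChordalSq_infty]⟩
  | coe w => exact ⟨_, _, _, weightedChordalSq_coe_line w v d⟩

lemma IsLocalMax.weightedChordalSq_line {a y : X} {v : V}
    (h : IsLocalMax (fun x => chordal x y / chordal a x) (v : X)) (hav : a ≠ v) (d : V) :
    IsLocalMax (fun t : ℝ => chordal a v ^ 2 * weightedChordalSq y (v + t • d) -
      chordal (v : X) y ^ 2 * weightedChordalSq a (v + t • d)) 0 := by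
  have hline : Tendsto (fun t : ℝ => ((v + t • d : V) : X)) (𝓝 0) (𝓝 (v : X)) := by
    have : Continuous fun t : ℝ => v + t • d := by fun_prop
    simpa [Function.comp_def] using (OnePoint.continuous_coe.comp this).tendsto 0
  filter_upwards [hline.eventually h, hline.eventually (eventually_ne_nhds hav.symm)]
    with t hle hne
  set x := v + t • d
  rw [div_le_div_iff₀ (chordal_pos hne.symm) (chordal_pos hav)] at hle
  have hsq := pow_le_pow_left₀ (by positivity [chordal_nonneg (x : X) y, chordal_nonneg a v]) hle 2
  simp only [zero_smul, add_zero, weightedChordalSq, chordal_comm y]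
  calc chordal a v ^ 2 * ((1 + ‖x‖ ^ 2) * chordal (x : X) y ^ 2) -
        chordal (v : X) y ^ 2 * ((1 + ‖x‖ ^ 2) * chordal a x ^ 2)
      = (1 + ‖x‖ ^ 2) * ((chordal x y * chordal a v) ^ 2 - (chordal v y * chordal a x) ^ 2) := by
        ring
    _ ≤ 0 := mul_nonpos_of_nonneg_of_nonpos (by positivity) (by linarith)
    _ = _ := by ring

lemma not_isLocalMax_chordal_div_infty_at_coe [Nontrivial V] (w v : V) :
    ¬ IsLocalMax (fun x => chordal x (w : X) / chordal ∞ x) (v : X) := by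
  intro h
  obtain ⟨d, hd⟩ := exists_ne (0 : V)
  set A := chordal (∞ : X) v ^ 2
  have hγ := (h.weightedChordalSq_line (infty_ne_coe v) d).quadratic_coeff_nonpos_and_le
    (α := A * weightedChordalSq w v - chordal (v : X) w ^ 2)
    (β := A * (2 * inner ℝ (v - w) d / (1 + ‖w‖ ^ 2))) (γ := A * (‖d‖ ^ 2 / (1 + ‖w‖ ^ 2)))
    (fun t => by rw [weightedChordalSq_coe_line, weightedChordalSq_infty]; ring)
  have : 0 < A * (‖d‖ ^ 2 / (1 + ‖w‖ ^ 2)) := by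
    have : 0 < chordal (∞ : X) v := chordal_pos (infty_ne_coe v)
    have := norm_pos_iff.2 hd
    positivity
  linarith [hγ.1]

lemma not_isLocalMax_chordal_div_coe_at_coe {y : X} {u v : V} (huy : (u : X) ≠ y) (huv : u ≠ v) :
    ¬ IsLocalMax (fun x => chordal x y / chordal u x) (v : X) := by
  intro h
  have hav : (u : X) ≠ v := fun e => huv (coe_injective e)
  -- along the line from `v` through `u` the quadratic vanishes at `v` and is positive at `u`
  obtain ⟨α, β, γ, hy⟩ := exists_weightedChordalSq_line y v (u - v)
  set A := chordal (u : X) v ^ 2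
  set B := chordal (v : X) y ^ 2
  have hle := ((h.weightedChordalSq_line hav (u - v)).quadratic_coeff_nonpos_and_le
    (α := A * α - B * weightedChordalSq u v)
    (β := A * β - B * (2 * inner ℝ (v - u) (u - v) / (1 + ‖u‖ ^ 2)))
    (γ := A * γ - B * (‖u - v‖ ^ 2 / (1 + ‖u‖ ^ 2)))
    (fun t => by rw [hy t, weightedChordalSq_coe_line]; ring)).2 1
  simp only [one_smul, add_sub_cancel, zero_smul, add_zero, weightedChordalSq, chordal_self,
    chordal_comm y, chordal_comm (u : X) v] at hle
  have : 0 < chordal (v : X) u ^ 2 * ((1 + ‖u‖ ^ 2) * chordal (u : X) y ^ 2) := by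
    have := chordal_pos hav.symm
    have := chordal_pos huy
    positivity
  linarith

lemma not_isLocalMax_chordal_div_self [Nontrivial V] {a y : X} (hay : a ≠ y) :
    ¬ IsLocalMax (fun x => chordal x y / chordal a x) y := by
  intro h
  obtain ⟨x, ⟨hle, hxa⟩, hxy⟩ := ((h.and (eventually_ne_nhds hay.symm)).filter_mono
    nhdsWithin_le_nhds |>.and (self_mem_nhdsWithin (s := {y}ᶜ))).exists
  have : 0 < chordal x y / chordal a x := div_pos (chordal_pos hxy) (chordal_pos hxa.symm)
  simp only [chordal_self, zero_div] at hle
  linarith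

lemma tendsto_coe_add_smul_atTop {u e : V} (he : e ≠ 0) :
    Tendsto (fun t : ℝ => ((u + t • e : V) : X)) atTop (𝓝 ∞) := by
  refine tendsto_coe_infty.comp ?_
  rw [coclosedCompact_eq_cocompact, ← Metric.cobounded_eq_cocompact,
    ← tendsto_norm_atTop_iff_cobounded]
  refine tendsto_atTop_mono (fun t => ?_) (tendsto_atTop_add_const_right _ (-‖u‖)
    (tendsto_id.atTop_mul_const (norm_pos_iff.2 he)))
  have h1 : t * ‖e‖ ≤ ‖t • e‖ := by
    rw [norm_smul, Real.norm_eq_abs]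
    exact mul_le_mul_of_nonneg_right (le_abs_self t) (norm_nonneg e)
  have h2 := norm_sub_norm_le (t • e) (-u)
  rw [norm_neg, sub_neg_eq_add, add_comm] at h2
  simp only [id]
  linarith

lemma not_isLocalMax_chordal_div_at_infty {u w : V} (huw : u ≠ w) :
    ¬ IsLocalMax (fun x => chordal x (w : X) / chordal (u : X) x) ∞ := by
  intro h
  obtain ⟨t, hle, ht⟩ := ((tendsto_coe_add_smul_atTop (u := u) (sub_ne_zero.2 huw)).eventually h
    |>.and (eventually_gt_atTop 0)).exists
  have he : 0 < ‖u - w‖ := norm_pos_iff.2 (sub_ne_zero.2 huw)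
  have e1 : u + t • (u - w) - w = (1 + t) • (u - w) := by module
  have e2 : u - (u + t • (u - w)) = -(t • (u - w)) := by abel
  simp only [chordal_coe_coe, chordal_infty_coe, chordal_coe_infty, dist_eq_norm, e1, e2,
    norm_neg, norm_smul, Real.norm_of_nonneg ht.le, Real.norm_of_nonneg (by linarith : 0 ≤ 1 + t)]
    at hle
  field_simp at hle
  linarith

theorem not_isLocalMax_chordal_div [Nontrivial V] {a y x₀ : X} (hay : a ≠ y) (hax : a ≠ x₀) :
    ¬ IsLocalMax (fun x => chordal x y / chordal a x) x₀ := by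
  obtain rfl | hxy := eq_or_ne x₀ y
  · exact not_isLocalMax_chordal_div_self hay
  cases x₀ using OnePoint.rec with
  | infty =>
    cases a using OnePoint.rec with
    | infty => exact absurd rfl hax
    | coe u =>
      cases y using OnePoint.rec with
      | infty => exact absurd rfl hxy
      | coe w => exact not_isLocalMax_chordal_div_at_infty fun h => hay (congrArg _ h)
  | coe v =>
    cases a using OnePoint.rec with
    | infty =>
      cases y using OnePoint.rec with
      | infty => exact absurd rfl hay
      | coe w => exact not_isLocalMax_chordal_div_infty_at_coe w v
    | coe u => exact not_isLocalMax_chordal_div_coe_at_coe hay fun e => hax (congrArg _ e)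

theorem exists_mem_frontier_chordal_div_le [Nontrivial V] {K : Set X} (hK : IsClosed K)
    {a y x : X} (haK : a ∉ K) (hay : a ≠ y) (hx : x ∈ K) :
    ∃ x' ∈ frontier K, chordal x y / chordal a x ≤ chordal x' y / chordal a x' := by
  have hcont : ContinuousOn (fun x => chordal x y / chordal a x) K := fun z hz =>
    ((continuous_chordal_left y).continuousAt.div (continuous_chordal_right a).continuousAt
      (chordal_pos (ne_of_mem_of_not_mem hz haK).symm).ne').continuousWithinAt
  obtain ⟨x₀, hx₀K, hmax⟩ := hK.isCompact.exists_isMaxOn ⟨x, hx⟩ hcont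
  refine ⟨x₀, ?_, hmax hx⟩
  by_contra hfr
  have hint : x₀ ∈ interior K := by
    rw [hK.frontier_eq] at hfr
    exact not_not.1 fun h => hfr ⟨hx₀K, h⟩
  exact not_isLocalMax_chordal_div hay (fun h => haK (h ▸ hx₀K))
    (hmax.isLocalMax (mem_interior_iff_mem_nhds.1 hint))

end MaximumPrinciple

section CrossSup

noncomputable def logCross (p q : X × X) : ℝ := Real.log (1 + qCross q.1 p.1 q.2 p.2)

noncomputable def crossSup (P Q : Set X) : ℝ := sSup (uncurry logCross '' ((P ×ˢ P) ×ˢ (Q ×ˢ Q)))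

lemma qCross_nonneg (a x b y : X) : 0 ≤ qCross a x b y := by
  have := chordal_nonneg a b; have := chordal_nonneg x y
  have := chordal_nonneg a x; have := chordal_nonneg b y
  unfold qCross
  positivity

lemma qCross_eq_mul_chordal_div (a x b y : X) :
    qCross a x b y = chordal a b / chordal b y * (chordal x y / chordal a x) := by
  rw [qCross, mul_comm (chordal a x), mul_div_mul_comm]

lemma logCross_nonneg (p q : X × X) : 0 ≤ logCross p q :=
  Real.log_nonneg (le_add_of_nonneg_right (qCross_nonneg _ _ _ _))

lemma logCross_comm (p q : X × X) : logCross p q = logCross q p := by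
  simp only [logCross, qCross, chordal_comm q.1 p.1, chordal_comm q.2 p.2,
    mul_comm (chordal q.1 q.2)]

lemma logCross_swap (x y a b : X) : logCross (x, y) (a, b) = logCross (y, x) (b, a) := by
  simp only [logCross, qCross, chordal_comm b a, chordal_comm y x, mul_comm (chordal a x)]

lemma logCross_le_logCross_of_chordal_div_le {x x' y a b : X}
    (h : chordal x y / chordal a x ≤ chordal x' y / chordal a x') :
    logCross (x, y) (a, b) ≤ logCross (x', y) (a, b) := by
  refine Real.log_le_log (by linarith [qCross_nonneg a x b y]) ?_
  simp only [qCross_eq_mul_chordal_div]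
  have := chordal_nonneg a b; have := chordal_nonneg b y
  gcongr

lemma continuousAt_logCross {p q : X × X} (h₁ : q.1 ≠ p.1) (h₂ : q.2 ≠ p.2) :
    ContinuousAt (uncurry logCross) (p, q) := by
  have hc : ∀ {f g : (X × X) × (X × X) → X}, Continuous f → Continuous g →
      Continuous fun r => chordal (f r) (g r) := fun hf hg => continuous_chordal.comp (hf.prodMk hg)
  have hq : ContinuousAt (fun r : (X × X) × (X × X) => qCross r.2.1 r.1.1 r.2.2 r.1.2) (p, q) :=
    ((hc (by fun_prop) (by fun_prop)).mul (hc (by fun_prop) (by fun_prop))).continuousAt.div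
      ((hc (by fun_prop) (by fun_prop)).mul (hc (by fun_prop) (by fun_prop))).continuousAt
      (mul_pos (chordal_pos h₁) (chordal_pos h₂)).ne'
  exact (continuousAt_const.add hq).log
    (add_pos_of_pos_of_nonneg one_pos (qCross_nonneg _ _ _ _)).ne'

lemma bddAbove_logCross {P Q : Set X} (h : Disjoint (closure P) (closure Q)) :
    BddAbove (uncurry logCross '' ((P ×ˢ P) ×ˢ (Q ×ˢ Q))) := by
  have hK : IsCompact ((closure P ×ˢ closure P) ×ˢ (closure Q ×ˢ closure Q)) :=
    isClosed_closure.isCompact.prod isClosed_closure.isCompact |>.prod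
      (isClosed_closure.isCompact.prod isClosed_closure.isCompact)
  refine (hK.bddAbove_image fun r hr => ?_).mono (image_mono ?_)
  · exact (continuousAt_logCross (h.ne_of_mem hr.1.1 hr.2.1).symm
      (h.ne_of_mem hr.1.2 hr.2.2).symm).continuousWithinAt
  · exact prod_mono (prod_mono subset_closure subset_closure)
      (prod_mono subset_closure subset_closure)

variable {P Q P' Q' : Set (OnePoint (EuclideanSpace ℝ (Fin n)))}

lemma crossSup_nonneg : 0 ≤ crossSup P Q :=
  Real.sSup_nonneg (forall_mem_image.2 fun _ _ => logCross_nonneg _ _)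

lemma le_crossSup (hb : BddAbove (uncurry logCross '' ((P ×ˢ P) ×ˢ (Q ×ˢ Q)))) {p q : X × X}
    (hp : p ∈ P ×ˢ P) (hq : q ∈ Q ×ˢ Q) : logCross p q ≤ crossSup P Q :=
  le_csSup hb ⟨(p, q), ⟨hp, hq⟩, rfl⟩

lemma crossSup_le {c : ℝ} (hc : 0 ≤ c) (h : ∀ p ∈ P ×ˢ P, ∀ q ∈ Q ×ˢ Q, logCross p q ≤ c) :
    crossSup P Q ≤ c :=
  Real.sSup_le (forall_mem_image.2 fun _ hr => h _ hr.1 _ hr.2) hc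

lemma crossSup_mono (hb : BddAbove (uncurry logCross '' ((P' ×ˢ P') ×ˢ (Q' ×ˢ Q'))))
    (hP : P ⊆ P') (hQ : Q ⊆ Q') : crossSup P Q ≤ crossSup P' Q' :=
  crossSup_le crossSup_nonneg fun _ hp _ hq =>
    le_crossSup hb (prod_mono hP hP hp) (prod_mono hQ hQ hq)

lemma crossSup_comm (P Q : Set X) : crossSup P Q = crossSup Q P := by
  rw [crossSup, crossSup, ← image_swap_prod (Q ×ˢ Q) (P ×ˢ P), image_image]
  exact congrArg sSup (image_congr fun r _ => logCross_comm _ _)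

lemma deltaDiam_compl_eq_crossSup {E F : Set X} (hE : E.Nonempty)
    (hb : BddAbove (uncurry logCross '' ((E ×ˢ E) ×ˢ (frontier F ×ˢ frontier F)))) :
    deltaDiam Fᶜ E = crossSup E (frontier F) := by
  have hpt : ∀ p ∈ E ×ˢ E, deltaHat Fᶜ p.1 p.2 ≤ crossSup E (frontier F) := fun p hp =>
    Real.sSup_le (forall_mem_image.2 fun q hq => le_crossSup hb hp (frontier_compl F ▸ hq))
      crossSup_nonneg
  refine le_antisymm (csSup_le ((hE.prod hE).image _) (forall_mem_image.2 hpt)) ?_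
  refine crossSup_le (Real.sSup_nonneg (forall_mem_image.2 fun p _ => Real.sSup_nonneg
    (forall_mem_image.2 fun q _ => logCross_nonneg p q))) fun p hp q hq => ?_
  have hq' : q ∈ frontier Fᶜ ×ˢ frontier Fᶜ := by rwa [frontier_compl]
  calc logCross p q ≤ deltaHat Fᶜ p.1 p.2 :=
        le_csSup ⟨_, forall_mem_image.2 fun q hq => le_crossSup hb hp (frontier_compl F ▸ hq)⟩
          (mem_image_of_mem _ hq')
    _ ≤ deltaDiam Fᶜ E := le_csSup ⟨_, forall_mem_image.2 hpt⟩ (mem_image_of_mem _ hp)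

lemma crossSup_closure_left (h : Disjoint (closure P) (closure Q)) :
    crossSup (closure P) Q = crossSup P Q := by
  refine le_antisymm (crossSup_le crossSup_nonneg fun p hp q hq => ?_)
    (crossSup_mono (bddAbove_logCross (by rwa [closure_closure])) subset_closure subset_rfl)
  have hmem : (p, q) ∈ closure ((P ×ˢ P) ×ˢ (Q ×ˢ Q)) := by
    simp only [closure_prod_eq]
    exact ⟨hp, subset_closure hq.1, subset_closure hq.2⟩
  have hcont := continuousAt_logCross (h.ne_of_mem hp.1 (subset_closure hq.1)).symm
    (h.ne_of_mem hp.2 (subset_closure hq.2)).symm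
  have hsub : closure (uncurry logCross '' ((P ×ˢ P) ×ˢ (Q ×ˢ Q))) ⊆ Iic (crossSup P Q) :=
    closure_minimal (forall_mem_image.2 fun _ hr => le_crossSup (bddAbove_logCross h) hr.1 hr.2)
      isClosed_Iic
  exact hsub (mem_closure_image hcont hmem)

lemma crossSup_closure_eq_frontier [Nontrivial V] (h : Disjoint (closure P) (closure Q)) :
    crossSup (closure P) Q = crossSup (frontier P) Q := by
  have hbdd : Disjoint (closure (frontier P)) (closure Q) := by
    rw [isClosed_frontier.closure_eq]
    exact h.mono_left frontier_subset_closure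
  refine le_antisymm (crossSup_le crossSup_nonneg ?_)
    (crossSup_mono (bddAbove_logCross (by rwa [closure_closure])) frontier_subset_closure
      subset_rfl)
  rintro ⟨x, y⟩ ⟨hx, hy⟩ ⟨a, b⟩ ⟨ha, hb⟩
  have haP : a ∉ closure P := fun h' => h.ne_of_mem h' (subset_closure ha) rfl
  have hbP : b ∉ closure P := fun h' => h.ne_of_mem h' (subset_closure hb) rfl
  obtain ⟨x', hx', hxx'⟩ := exists_mem_frontier_chordal_div_le isClosed_closure haP
    (ne_of_mem_of_not_mem hy haP).symm hx
  have hx'P : x' ∈ closure P := isClosed_closure.frontier_subset hx'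
  obtain ⟨y', hy', hyy'⟩ := exists_mem_frontier_chordal_div_le isClosed_closure hbP
    (ne_of_mem_of_not_mem hx'P hbP).symm hy
  calc logCross (x, y) (a, b) ≤ logCross (x', y) (a, b) :=
        logCross_le_logCross_of_chordal_div_le hxx'
    _ = logCross (y, x') (b, a) := logCross_swap _ _ _ _
    _ ≤ logCross (y', x') (b, a) := logCross_le_logCross_of_chordal_div_le hyy'
    _ = logCross (x', y') (a, b) := logCross_swap _ _ _ _
    _ ≤ crossSup (frontier P) Q := le_crossSup (bddAbove_logCross hbdd)
        ⟨frontier_closure_subset hx', frontier_closure_subset hy'⟩ ⟨ha, hb⟩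

end CrossSup

/-- Symmetry of `δ(E,F) = δ_{ℝ̂ⁿ∖F}(E)`: for nonempty `E,F ⊆ ℝ̂ⁿ` with disjoint
closures, `δ_{ℝ̂ⁿ∖F}(E) = δ_{ℝ̂ⁿ∖E}(F)`. -/
theorem stmt16 (n : ℕ) (E F : Set (OnePoint (EuclideanSpace ℝ (Fin n))))
    (hE : E.Nonempty) (hF : F.Nonempty) (hd : closure E ∩ closure F = ∅) :
    deltaDiam Fᶜ E = deltaDiam Eᶜ F := by
  have hEF : Disjoint (closure E) (closure F) := disjoint_iff_inter_eq_empty.2 hd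
  have hE' : Disjoint (closure E) (closure (frontier F)) := by
    rw [isClosed_frontier.closure_eq]
    exact hEF.mono_right frontier_subset_closure
  have hF' : Disjoint (closure F) (closure (frontier E)) := by
    rw [isClosed_frontier.closure_eq]
    exact hEF.symm.mono_right frontier_subset_closure
  rw [deltaDiam_compl_eq_crossSup hE (bddAbove_logCross hE'),
    deltaDiam_compl_eq_crossSup hF (bddAbove_logCross hF'),
    ← crossSup_closure_left hE', ← crossSup_closure_left hF']
  rcases subsingleton_or_nontrivial (EuclideanSpace ℝ (Fin n)) with _ | _
  · -- for `n = 0`, `ℝ̂ⁿ` has two points, so all frontiers are empty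
    have : Finite (OnePoint (EuclideanSpace ℝ (Fin n))) := inferInstanceAs (Finite (Option _))
    simp [crossSup]
  · rw [crossSup_closure_eq_frontier hE', crossSup_closure_eq_frontier hF', crossSup_comm]
end
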